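/- Let F be a field and let V be an infinite-dimensional vector space over F. Then neither the algebra End_F(V) nor the algebra End_fin(V) of finite-rank endomorphisms admits an anti-automorphism; equivalently, neither of these F-algebras is isomorphic to its opposite algebra. -/
import Mathlib


/-- An endomorphism has finite rank, i.e. finite-dimensional range. -/
def FinRank {F V : Type*} [Field F] [AddCommGroup V] [Module F V]
    (a : Module.End F V) : Prop :=
  Module.Finite F (LinearMap.range a)

universe u v

section Aux

variable {F V : Type*} [Field F] [AddCommGroup V] [Module F V]

open LinearMap Module

/-- For a nonzero vector there is a functional sending it to 1. -/
lemma exists_dual_eq_one (v : V) (hv : v ≠ 0) : ∃ f : Module.Dual F V, f v = 1 := by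
  have h := (Module.forall_dual_apply_eq_zero_iff F v).not.2 hv
  push_neg at h
  obtain ⟨g, hg⟩ := h
  exact ⟨(g v)⁻¹ • g, by simp [inv_mul_cancel₀ hg]⟩

lemma finRank_smulRight (f : Module.Dual F V) (v : V) : FinRank (f.smulRight v) := by
  have hle : LinearMap.range (f.smulRight v) ≤ Submodule.span F {v} := by
    rintro x ⟨y, rfl⟩
    exact Submodule.smul_mem _ _ (Submodule.mem_span_singleton_self v)
  have : FiniteDimensional F (Submodule.span F ({v} : Set V)) :=
    FiniteDimensional.span_of_finite F (Set.finite_singleton v)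
  exact Submodule.finiteDimensional_of_le hle

lemma finRank_mul (a b : Module.End F V) (ha : FinRank a) : FinRank (a * b) := by
  have hle : LinearMap.range (a * b) ≤ LinearMap.range a := by
    rw [Module.End.mul_eq_comp]
    exact LinearMap.range_comp_le_range b a
  have : FiniteDimensional F (LinearMap.range a) := ha
  exact Submodule.finiteDimensional_of_le hle

/-- Key lemma: no "anti-automorphism" of a suitable multiplicatively closed set `P`
of endomorphisms of an infinite-dimensional space containing all rank-one maps. -/
lemma key' {F : Type u} {V : Type v} [Field F] [AddCommGroup V] [Module F V] (hV : ¬ Module.Finite F V) (P : Module.End F V → Prop)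
    (hP1 : ∀ (v : V) (f : Module.Dual F V), P (f.smulRight v))
    (hPmul : ∀ a b, P a → P b → P (a * b))
    (φ : Module.End F V → Module.End F V)
    (hinj : ∀ a b, P a → P b → φ a = φ b → a = b)
    (hsurj : ∀ b, P b → ∃ a, P a ∧ φ a = b)
    (hadd : ∀ a b, P a → P b → φ (a + b) = φ a + φ b)
    (hsmul : ∀ (c : F) a, P a → φ (c • a) = c • φ a)
    (hmul : ∀ a b, P a → P b → φ (a * b) = φ b * φ a) : False := by
  classical
  have hnt : Nontrivial V := by
    by_contra h
    have : Subsingleton V := not_nontrivial_iff_subsingleton.mp h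
    exact hV (Module.Finite.of_basis (Basis.empty (ι := Empty) V))
  obtain ⟨v₀, hv₀⟩ := exists_ne (0 : V)
  obtain ⟨f₀, hf₀⟩ := exists_dual_eq_one (F := F) v₀ hv₀
  set e : Module.End F V := f₀.smulRight v₀ with he
  have hPe : P e := hP1 _ _
  have hP0 : P (0 : Module.End F V) := by
    have := hP1 (0 : V) 0
    simpa using this
  have hφ0 : φ 0 = 0 := by
    have h := hadd 0 0 hP0 hP0
    simp only [add_zero] at h
    exact left_eq_add.mp h
  have he0 : e ≠ 0 := by
    intro h
    have h2 : e v₀ = 0 := by rw [h]; rfl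
    rw [he] at h2
    simp only [LinearMap.smulRight_apply, hf₀, one_smul] at h2
    exact hv₀ h2
  set ebar := φ e with hebar
  have hebar0 : ebar ≠ 0 := fun h => he0 (hinj e 0 hPe hP0 (by rw [← hebar, h, hφ0]))
  obtain ⟨u, hu⟩ : ∃ u, ebar u ≠ 0 := by
    by_contra h; push_neg at h
    exact hebar0 (LinearMap.ext fun x => h x)
  set w₀ := ebar u with hw₀
  -- ebar has rank one, algebraically
  have hone : ∀ b, P b → ∃ c : F, ebar * b * ebar = c • ebar := by
    intro b hb
    obtain ⟨b', hb', rfl⟩ := hsurj b hb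
    refine ⟨f₀ (b' v₀), ?_⟩
    have h1 : e * b' * e = f₀ (b' v₀) • e := by
      apply LinearMap.ext; intro x
      simp only [Module.End.mul_apply, LinearMap.smul_apply, he, LinearMap.smulRight_apply,
        map_smul, smul_smul]
      rw [mul_comm]
    have h2 : φ (e * b' * e) = ebar * (φ b' * ebar) := by
      rw [hmul (e * b') e (hPmul e b' hPe hb') hPe, hmul e b' hPe hb']
    rw [mul_assoc, ← h2, h1, hsmul _ e hPe]
  -- range of ebar is spanned by w₀
  have hspan : ∀ x, ∃ c : F, ebar x = c • w₀ := by
    intro x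
    by_contra hc; push_neg at hc
    have hw : w₀ ∉ Submodule.span F {ebar x} := by
      intro hmem
      obtain ⟨d, hd⟩ := Submodule.mem_span_singleton.mp hmem
      have hd0 : d ≠ 0 := by
        rintro rfl; rw [zero_smul] at hd; rw [hw₀] at hd; exact hu hd.symm
      exact hc d⁻¹ (by rw [← hd, smul_smul, inv_mul_cancel₀ hd0, one_smul])
    have hπ : Submodule.Quotient.mk (p := Submodule.span F {ebar x}) w₀ ≠ 0 := by
      rwa [ne_eq, Submodule.Quotient.mk_eq_zero]
    obtain ⟨h, hh⟩ := exists_dual_eq_one (F := F) _ hπ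
    set g : Module.Dual F V := h.comp (Submodule.span F {ebar x}).mkQ with hg
    have hg1 : g w₀ = 1 := hh
    have hg2 : g (ebar x) = 0 := by
      have hm : ((Submodule.span F {ebar x}).mkQ) (ebar x) = 0 := by
        rw [Submodule.mkQ_apply, Submodule.Quotient.mk_eq_zero]
        exact Submodule.mem_span_singleton_self _
      simp [hg, hm]
    obtain ⟨c, hcebar⟩ := hone (g.smulRight x) (hP1 x g)
    have hcu := congrArg (fun m : Module.End F V => m u) hcebar
    simp only [Module.End.mul_apply, LinearMap.smulRight_apply, LinearMap.smul_apply] at hcu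
    rw [← hw₀, hg1, one_smul] at hcu
    exact hc c hcu
  -- the family of rank-one maps into the line spanned by v₀
  set A : Module.Dual F V → Module.End F V := fun f => f.smulRight v₀ with hA
  have hPA : ∀ f, P (A f) := fun f => hP1 v₀ f
  have heA : ∀ f, e * A f = A f := by
    intro f; apply LinearMap.ext; intro x
    simp [hA, he, Module.End.mul_apply, LinearMap.smulRight_apply, map_smul, hf₀, smul_smul]
  have hfac : ∀ f x (c : F), ebar x = c • w₀ → φ (A f) x = c • φ (A f) w₀ := by
    intro f x c hcx
    have h1 : φ (A f) = φ (A f) * ebar := by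
      conv_lhs => rw [← heA f]
      rw [hmul e (A f) hPe (hPA f)]
    calc φ (A f) x = (φ (A f) * ebar) x := by rw [← h1]
      _ = φ (A f) (ebar x) := rfl
      _ = φ (A f) (c • w₀) := by rw [hcx]
      _ = c • φ (A f) w₀ := map_smul _ _ _
  have hAadd : ∀ f f', A (f + f') = A f + A f' := by
    intro f f'; apply LinearMap.ext; intro x
    simp [hA, add_smul]
  have hAsmul : ∀ (c : F) f, A (c • f) = c • A f := by
    intro c f; apply LinearMap.ext; intro x
    simp [hA, smul_smul]
  let Tl : Module.Dual F V →ₗ[F] V :=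
    { toFun := fun f => φ (A f) w₀
      map_add' := fun f f' => by
        show φ (A (f + f')) w₀ = φ (A f) w₀ + φ (A f') w₀
        rw [hAadd, hadd (A f) (A f') (hPA f) (hPA f')]
        simp
      map_smul' := fun c f => by
        show φ (A (c • f)) w₀ = c • φ (A f) w₀
        rw [hAsmul, hsmul c (A f) (hPA f)]
        simp }
  have hTinj : Function.Injective Tl := by
    intro f f' hff
    have hAeq : A f = A f' := by
      apply hinj _ _ (hPA f) (hPA f')
      apply LinearMap.ext; intro x
      obtain ⟨c, hcx⟩ := hspan x
      rw [hfac f x c hcx, hfac f' x c hcx]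
      exact congrArg (c • ·) hff
    apply LinearMap.ext; intro x
    have hx := congrArg (fun m : Module.End F V => m x) hAeq
    simp only [hA, LinearMap.smulRight_apply] at hx
    have h0 : (f x - f' x) • v₀ = 0 := by rw [sub_smul, hx, sub_self]
    rcases smul_eq_zero.mp h0 with h | h
    · exact sub_eq_zero.mp h
    · exact absurd h hv₀
  have hrank : Cardinal.aleph0 ≤ Module.rank F V := by
    by_contra h
    push_neg at h
    exact hV (Module.rank_lt_aleph0_iff.mp h)
  have h1 := LinearMap.lift_rank_le_of_injective Tl hTinj
  have h2 := lift_rank_lt_rank_dual (K := F) (V := V) hrank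
  have h2' : Cardinal.lift.{v} (Cardinal.lift.{u} (Module.rank F V)) <
      Cardinal.lift.{v} (Module.rank F (Module.Dual F V)) := Cardinal.lift_lt.mpr h2
  rw [Cardinal.lift_lift] at h2'
  exact absurd (h2'.trans_le h1) (lt_irrefl _)

end Aux

/-- For an infinite-dimensional vector space `V` over a field `F`,
neither the algebra `End_F(V)` nor the algebra `End_fin(V)` of finite-rank
endomorphisms admits an anti-automorphism. -/
theorem stmt_17 (F V : Type*) [Field F] [AddCommGroup V] [Module F V]
    (hV : ¬ Module.Finite F V) :
    (¬ ∃ φ : Module.End F V →ₗ[F] Module.End F V,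
        Function.Bijective φ ∧ ∀ a b : Module.End F V, φ (a * b) = φ b * φ a) ∧
    (¬ ∃ φ : Module.End F V → Module.End F V,
        Set.BijOn φ {a : Module.End F V | FinRank a} {a : Module.End F V | FinRank a} ∧
        (∀ a b, FinRank a → FinRank b → φ (a + b) = φ a + φ b) ∧
        (∀ (c : F) (a), FinRank a → φ (c • a) = c • φ a) ∧
        (∀ a b, FinRank a → FinRank b → φ (a * b) = φ b * φ a)) := by
  constructor
  · rintro ⟨φ, ⟨hinj, hsurj⟩, hmul⟩
    refine key' hV (fun _ => True) (fun _ _ => trivial) (fun _ _ _ _ => trivial) φ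
      (fun a b _ _ h => hinj h)
      (fun b _ => by obtain ⟨a, ha⟩ := hsurj b; exact ⟨a, trivial, ha⟩)
      (fun a b _ _ => map_add φ a b) (fun c a _ => map_smul φ c a)
      (fun a b _ _ => hmul a b)
  · rintro ⟨φ, hbij, hadd, hsmul, hmul⟩
    refine key' hV FinRank (fun v f => finRank_smulRight f v)
      (fun a b ha _ => finRank_mul a b ha) φ
      (fun a b ha hb h => hbij.injOn ha hb h)
      (fun b hb => by obtain ⟨a, ha, hab⟩ := hbij.surjOn hb; exact ⟨a, ha, hab⟩)
      (fun a b ha hb => hadd a b ha hb) (fun c a ha => hsmul c a ha)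
      (fun a b ha hb => hmul a b ha hb)
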